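/- arXiv:2108.04304 — 3 statements merged into one kernel-verified Lean document; each statement's English description precedes it below -/
import Mathlib

section
/- In a Cartesian differential category, for any map f : A → B, its linearization L[f] := D[f] ∘ ι₁ (where ι₁ = ⟨0, 1_A⟩ : A → A × A) is a D-linear map, i.e. D[L[f]] = L[f] ∘ π₁. -/
/-!
Self-contained formalization of Cartesian left additive categories (CLAC),
following Blute–Cockett–Seely / Ikonicoff–Lemay.
-/

universe u v

structure CLAC where
  Obj : Type u
  Hom : Obj → Obj → Type v
  id : (A : Obj) → Hom A A
  comp : {A B C : Obj} → Hom B C → Hom A B → Hom A C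
  id_comp : ∀ {A B : Obj} (f : Hom A B), comp (id B) f = f
  comp_id : ∀ {A B : Obj} (f : Hom A B), comp f (id A) = f
  comp_assoc : ∀ {A B C D : Obj} (h : Hom C D) (g : Hom B C) (f : Hom A B),
    comp (comp h g) f = comp h (comp g f)
  top : Obj
  toTop : (A : Obj) → Hom A top
  toTop_unique : ∀ {A : Obj} (f : Hom A top), f = toTop A
  prod : Obj → Obj → Obj
  p0 : {A B : Obj} → Hom (prod A B) A
  p1 : {A B : Obj} → Hom (prod A B) B
  pair : {C A B : Obj} → Hom C A → Hom C B → Hom C (prod A B)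
  p0_pair : ∀ {C A B : Obj} (f : Hom C A) (g : Hom C B), comp p0 (pair f g) = f
  p1_pair : ∀ {C A B : Obj} (f : Hom C A) (g : Hom C B), comp p1 (pair f g) = g
  pair_unique : ∀ {C A B : Obj} (h : Hom C (prod A B)), pair (comp p0 h) (comp p1 h) = h
  add : {A B : Obj} → Hom A B → Hom A B → Hom A B
  zero : {A B : Obj} → Hom A B
  add_comm' : ∀ {A B : Obj} (f g : Hom A B), add f g = add g f
  add_assoc' : ∀ {A B : Obj} (f g h : Hom A B), add (add f g) h = add f (add g h)
  add_zero' : ∀ {A B : Obj} (f : Hom A B), add f zero = f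
  comp_add : ∀ {A' A B : Obj} (f g : Hom A B) (x : Hom A' A),
    comp (add f g) x = add (comp f x) (comp g x)
  comp_zero : ∀ {A' A B : Obj} (x : Hom A' A), comp (zero : Hom A B) x = zero
  p0_additive : ∀ {A' A B : Obj} (x y : Hom A' (prod A B)),
    comp p0 (add x y) = add (comp p0 x) (comp p0 y)
  p0_zero : ∀ {A' A B : Obj},
    comp (p0 : Hom (prod A B) A) (zero : Hom A' (prod A B)) = zero
  p1_additive : ∀ {A' A B : Obj} (x y : Hom A' (prod A B)),
    comp p1 (add x y) = add (comp p1 x) (comp p1 y)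
  p1_zero : ∀ {A' A B : Obj},
    comp (p1 : Hom (prod A B) B) (zero : Hom A' (prod A B)) = zero

namespace CLAC

variable (C : CLAC.{u, v})

/-- The injection `ι₀ := ⟨1, 0⟩ : A → A × B`. -/
def i0 {A B : C.Obj} : C.Hom A (C.prod A B) := C.pair (C.id A) C.zero

/-- The injection `ι₁ := ⟨0, 1⟩ : B → A × B`. -/
def i1 {A B : C.Obj} : C.Hom B (C.prod A B) := C.pair C.zero (C.id B)

/-- The product of maps `f × g`. -/
def pmap {A B A' B' : C.Obj} (f : C.Hom A A') (g : C.Hom B B') :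
    C.Hom (C.prod A B) (C.prod A' B') :=
  C.pair (C.comp f C.p0) (C.comp g C.p1)

/-- The sum map `∇ := π₀ + π₁`. -/
def nabla (A : C.Obj) : C.Hom (C.prod A A) A := C.add C.p0 C.p1

/-- The lifting map `ℓ := ι₀ × ι₁`. -/
def lmap (A : C.Obj) : C.Hom (C.prod A A) (C.prod (C.prod A A) (C.prod A A)) :=
  C.pmap C.i0 C.i1

/-- The interchange map `c := ⟨π₀ × π₀, π₁ × π₁⟩`. -/
def cmap (A : C.Obj) :
    C.Hom (C.prod (C.prod A A) (C.prod A A)) (C.prod (C.prod A A) (C.prod A A)) :=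
  C.pair (C.pmap C.p0 C.p0) (C.pmap C.p1 C.p1)

/-- A map is additive when postcomposition preserves sums and zeros. -/
def Additive {A B : C.Obj} (f : C.Hom A B) : Prop :=
  (∀ {A' : C.Obj} (x y : C.Hom A' A),
      C.comp f (C.add x y) = C.add (C.comp f x) (C.comp f y)) ∧
  (∀ {A' : C.Obj}, C.comp f (C.zero : C.Hom A' A) = C.zero)

end CLAC

/-- The axioms [CD.1]–[CD.7] of a differential combinator on a Cartesian left
additive category. -/
structure IsDiffComb (C : CLAC.{u, v})
    (D : {A B : C.Obj} → C.Hom A B → C.Hom (C.prod A A) B) : Prop where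
  cd1_add : ∀ {A B : C.Obj} (f g : C.Hom A B), D (C.add f g) = C.add (D f) (D g)
  cd1_zero : ∀ {A B : C.Obj}, D (C.zero : C.Hom A B) = C.zero
  cd2_add : ∀ {A B : C.Obj} (f : C.Hom A B),
    C.comp (D f) (C.pmap (C.id A) (C.nabla A)) =
      C.add (C.comp (D f) (C.pmap (C.id A) C.p0)) (C.comp (D f) (C.pmap (C.id A) C.p1))
  cd2_zero : ∀ {A B : C.Obj} (f : C.Hom A B), C.comp (D f) C.i0 = C.zero
  cd3_id : ∀ {A : C.Obj}, D (C.id A) = C.p1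
  cd3_p0 : ∀ {A B : C.Obj}, D (C.p0 : C.Hom (C.prod A B) A) = C.comp C.p0 C.p1
  cd3_p1 : ∀ {A B : C.Obj}, D (C.p1 : C.Hom (C.prod A B) B) = C.comp C.p1 C.p1
  cd4 : ∀ {X A B : C.Obj} (f : C.Hom X A) (g : C.Hom X B),
    D (C.pair f g) = C.pair (D f) (D g)
  cd5 : ∀ {A B B' : C.Obj} (g : C.Hom B B') (f : C.Hom A B),
    D (C.comp g f) = C.comp (D g) (C.pair (C.comp f C.p0) (D f))
  cd6 : ∀ {A B : C.Obj} (f : C.Hom A B), C.comp (D (D f)) (C.lmap A) = D f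
  cd7 : ∀ {A B : C.Obj} (f : C.Hom A B), C.comp (D (D f)) (C.cmap A) = D (D f)

/-!
Write `L[f] = D[f] ∘ ι₁`. Since `ι₁` is D-linear, the chain rule gives
`D[L[f]] = D[D[f]] ∘ ⟨⟨0, π₀⟩, ⟨0, π₁⟩⟩`. The interchange axiom [CD.7] together with
additivity in the direction [CD.2] and the lifting axiom [CD.6] show that
`D[D[f]] ∘ ⟨⟨a, b⟩, ⟨0, d⟩⟩ = D[f] ∘ ⟨a, d⟩` for all `a, b, d`, so `D[L[f]] = D[f] ∘ ⟨0, π₁⟩`,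
which is `L[f] ∘ π₁`.
-/

namespace CLAC

variable {C : CLAC.{u, v}}

theorem pair_comp {X Y A B : C.Obj} (f : C.Hom X A) (g : C.Hom X B) (h : C.Hom Y X) :
    C.comp (C.pair f g) h = C.pair (C.comp f h) (C.comp g h) := by
  conv_lhs => rw [← C.pair_unique (C.comp (C.pair f g) h)]
  rw [← C.comp_assoc, ← C.comp_assoc, C.p0_pair, C.p1_pair]

theorem pair_zero_zero {X A B : C.Obj} :
    C.pair (C.zero : C.Hom X A) (C.zero : C.Hom X B) = C.zero := by
  conv_rhs => rw [← C.pair_unique C.zero]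
  rw [C.p0_zero, C.p1_zero]

theorem add_pair {X A B : C.Obj} (a a' : C.Hom X A) (b b' : C.Hom X B) :
    C.add (C.pair a b) (C.pair a' b') = C.pair (C.add a a') (C.add b b') := by
  conv_lhs => rw [← C.pair_unique (C.add (C.pair a b) (C.pair a' b'))]
  rw [C.p0_additive, C.p1_additive, C.p0_pair, C.p0_pair, C.p1_pair, C.p1_pair]

theorem zero_add' {A B : C.Obj} (f : C.Hom A B) : C.add C.zero f = f := by
  rw [C.add_comm', C.add_zero']

theorem i0_comp {X A B : C.Obj} (h : C.Hom X A) :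
    C.comp (C.i0 : C.Hom A (C.prod A B)) h = C.pair h C.zero := by
  rw [i0, pair_comp, C.id_comp, C.comp_zero]

theorem i1_comp {X A B : C.Obj} (h : C.Hom X B) :
    C.comp (C.i1 : C.Hom B (C.prod A B)) h = C.pair C.zero h := by
  rw [i1, pair_comp, C.id_comp, C.comp_zero]

theorem lmap_comp_pair {X A : C.Obj} (a d : C.Hom X A) :
    C.comp (C.lmap A) (C.pair a d) = C.pair (C.pair a C.zero) (C.pair C.zero d) := by
  rw [lmap, pmap, pair_comp, C.comp_assoc, C.comp_assoc, C.p0_pair, C.p1_pair, i0_comp,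
    i1_comp]

theorem cmap_comp_pair_pair {X A : C.Obj} (a b c d : C.Hom X A) :
    C.comp (C.cmap A) (C.pair (C.pair a b) (C.pair c d)) =
      C.pair (C.pair a c) (C.pair b d) := by
  simp only [cmap, pmap, pair_comp, C.comp_assoc, C.p0_pair, C.p1_pair]

end CLAC

namespace IsDiffComb

open CLAC

variable {C : CLAC.{u, v}} {D : {A B : C.Obj} → C.Hom A B → C.Hom (C.prod A A) B}

theorem comp_pair_zero (hD : IsDiffComb C D) {X A B : C.Obj} (g : C.Hom A B)
    (h : C.Hom X A) : C.comp (D g) (C.pair h C.zero) = C.zero := by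
  rw [← i0_comp h, ← C.comp_assoc, hD.cd2_zero, C.comp_zero]

theorem comp_pair_add (hD : IsDiffComb C D) {X A B : C.Obj} (g : C.Hom A B)
    (h a b : C.Hom X A) :
    C.comp (D g) (C.pair h (C.add a b)) =
      C.add (C.comp (D g) (C.pair h a)) (C.comp (D g) (C.pair h b)) := by
  have key := congrArg (fun k => C.comp k (C.pair h (C.pair a b))) (hD.cd2_add g)
  simpa only [pmap, nabla, C.comp_assoc, C.comp_add, pair_comp, C.p0_pair, C.p1_pair,
    C.id_comp] using key

theorem D_i1 (hD : IsDiffComb C D) {A B : C.Obj} :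
    D (C.i1 : C.Hom B (C.prod A B)) = C.pair C.zero C.p1 := by
  rw [i1, hD.cd4, hD.cd1_zero, hD.cd3_id]

theorem D_D_comp_interchange (hD : IsDiffComb C D) {X A B : C.Obj} (f : C.Hom A B)
    (a b c d : C.Hom X A) :
    C.comp (D (D f)) (C.pair (C.pair a b) (C.pair c d)) =
      C.comp (D (D f)) (C.pair (C.pair a c) (C.pair b d)) := by
  conv_lhs => rw [← hD.cd7 f, C.comp_assoc, cmap_comp_pair_pair]

theorem D_D_comp_lift (hD : IsDiffComb C D) {X A B : C.Obj} (f : C.Hom A B)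
    (a d : C.Hom X A) :
    C.comp (D (D f)) (C.pair (C.pair a C.zero) (C.pair C.zero d)) =
      C.comp (D f) (C.pair a d) := by
  conv_rhs => rw [← hD.cd6 f, C.comp_assoc, lmap_comp_pair]

theorem D_D_comp_pair_pair_zero (hD : IsDiffComb C D) {X A B : C.Obj} (f : C.Hom A B)
    (a b d : C.Hom X A) :
    C.comp (D (D f)) (C.pair (C.pair a b) (C.pair C.zero d)) =
      C.comp (D f) (C.pair a d) := by
  calc C.comp (D (D f)) (C.pair (C.pair a b) (C.pair C.zero d))
      = C.comp (D (D f)) (C.pair (C.pair a C.zero) (C.pair b d)) :=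
        hD.D_D_comp_interchange f a b C.zero d
    _ = C.add (C.comp (D (D f)) (C.pair (C.pair a C.zero) (C.pair b C.zero)))
          (C.comp (D (D f)) (C.pair (C.pair a C.zero) (C.pair C.zero d))) := by
        rw [← hD.comp_pair_add, add_pair, C.add_zero', zero_add']
    _ = C.comp (D f) (C.pair a d) := by
        rw [hD.D_D_comp_interchange f a C.zero b C.zero, pair_zero_zero, hD.comp_pair_zero,
          hD.D_D_comp_lift, zero_add']

end IsDiffComb

/-- In a Cartesian differential category, the linearization
`L[f] := D[f] ∘ ι₁` of any map `f : A → B` is D-linear, i.e.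
`D[L[f]] = L[f] ∘ π₁`. -/
theorem statement5 (C : CLAC.{u, v})
    (D : {A B : C.Obj} → C.Hom A B → C.Hom (C.prod A A) B)
    (hD : IsDiffComb C D) {A B : C.Obj} (f : C.Hom A B) :
    D (C.comp (D f) C.i1) = C.comp (C.comp (D f) C.i1) C.p1 := by
  calc D (C.comp (D f) C.i1)
      = C.comp (D (D f)) (C.pair (C.comp C.i1 C.p0) (D C.i1)) := hD.cd5 _ _
    _ = C.comp (D (D f)) (C.pair (C.pair C.zero C.p0) (C.pair C.zero C.p1)) := by
        rw [hD.D_i1, CLAC.i1_comp]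
    _ = C.comp (C.comp (D f) C.i1) C.p1 := by
        rw [hD.D_D_comp_pair_pair_zero, C.comp_assoc, CLAC.i1_comp]
end

section
/- Let (!, δ, ε, ∂) be a Cartesian differential comonad on a category X with finite biproducts. Then for every map f : A → B in X, the coKleisli map F(f) := f ∘ ε_A : !(A) → B satisfies F(f) ∘ ∂_A ∘ !(ι₁) = F(f); hence F(f) is D-linear in the coKleisli category. -/
/-!
Self-contained formalization of Cartesian left additive categories (CLAC),
following Blute–Cockett–Seely / Ikonicoff–Lemay.
-/

universe u v

/-- The data of a comonad `(!, δ, ε)` on `C`. -/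
structure ComonadData (C : CLAC.{u, v}) where
  obj : C.Obj → C.Obj
  map : {A B : C.Obj} → C.Hom A B → C.Hom (obj A) (obj B)
  δ : (A : C.Obj) → C.Hom (obj A) (obj (obj A))
  ε : (A : C.Obj) → C.Hom (obj A) A

/-- The comonad laws: functoriality, naturality of `δ` and `ε`, coassociativity
and the counit laws. -/
structure IsComonad (C : CLAC.{u, v}) (T : ComonadData C) : Prop where
  map_id : ∀ (A : C.Obj), T.map (C.id A) = C.id (T.obj A)
  map_comp : ∀ {A B B' : C.Obj} (g : C.Hom B B') (f : C.Hom A B),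
    T.map (C.comp g f) = C.comp (T.map g) (T.map f)
  δ_nat : ∀ {A B : C.Obj} (f : C.Hom A B),
    C.comp (T.map (T.map f)) (T.δ A) = C.comp (T.δ B) (T.map f)
  ε_nat : ∀ {A B : C.Obj} (f : C.Hom A B),
    C.comp f (T.ε A) = C.comp (T.ε B) (T.map f)
  coassoc : ∀ (A : C.Obj),
    C.comp (T.δ (T.obj A)) (T.δ A) = C.comp (T.map (T.δ A)) (T.δ A)
  counit_left : ∀ (A : C.Obj), C.comp (T.ε (T.obj A)) (T.δ A) = C.id (T.obj A)
  counit_right : ∀ (A : C.Obj), C.comp (T.map (T.ε A)) (T.δ A) = C.id (T.obj A)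

/-- The axioms [dc.1]–[dc.6] for a differential combinator transformation
`∂_A : !(A × A) → !(A)` on a comonad. -/
structure IsDCT (C : CLAC.{u, v}) (T : ComonadData C)
    (pd : (A : C.Obj) → C.Hom (T.obj (C.prod A A)) (T.obj A)) : Prop where
  nat : ∀ {A B : C.Obj} (f : C.Hom A B),
    C.comp (pd B) (T.map (C.pmap f f)) = C.comp (T.map f) (pd A)
  dc1 : ∀ (A : C.Obj), C.comp (pd A) (T.map C.i0) = C.zero
  dc2 : ∀ (A : C.Obj),
    C.comp (pd A) (T.map (C.pmap (C.id A) (C.nabla A))) =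
      C.comp (pd A)
        (C.add (T.map (C.pmap (C.id A) C.p0)) (T.map (C.pmap (C.id A) C.p1)))
  dc3 : ∀ (A : C.Obj),
    C.comp (T.ε A) (pd A) = C.comp C.p1 (T.ε (C.prod A A))
  dc4 : ∀ (A : C.Obj),
    C.comp (T.δ A) (pd A) =
      C.comp (pd (T.obj A))
        (C.comp (T.map (C.pair (T.map C.p0) (pd A))) (T.δ (C.prod A A)))
  dc5 : ∀ (A : C.Obj),
    C.comp (pd A) (C.comp (pd (C.prod A A)) (T.map (C.lmap A))) = pd A
  dc6 : ∀ (A : C.Obj),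
    C.comp (pd A) (C.comp (pd (C.prod A A)) (T.map (C.cmap A))) =
      C.comp (pd A) (pd (C.prod A A))

/-- A D-linear unit `η_A : A → !(A)` for a Cartesian differential comonad:
a natural transformation satisfying [du.1] `ε ∘ η = 1` and
[du.2] `∂ ∘ !(ι₁) = η ∘ ε`. -/
structure IsDLinUnit (C : CLAC.{u, v}) (T : ComonadData C)
    (pd : (A : C.Obj) → C.Hom (T.obj (C.prod A A)) (T.obj A))
    (η : (A : C.Obj) → C.Hom A (T.obj A)) : Prop where
  nat : ∀ {A B : C.Obj} (f : C.Hom A B),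
    C.comp (η B) f = C.comp (T.map f) (η A)
  du1 : ∀ (A : C.Obj), C.comp (T.ε A) (η A) = C.id A
  du2 : ∀ (A : C.Obj),
    C.comp (pd A) (T.map C.i1) = C.comp (η A) (T.ε A)

/-! By [dc.3], `ε ∘ ∂ = π₁ ∘ ε`. Precomposing with `!(ι₁)` and using naturality of `ε`
gives `π₁ ∘ ι₁ ∘ ε = ε`, so every map of the form `f ∘ ε` is D-linear. The coKleisli form
of D-linearity is the counit law `ε ∘ !(g) ∘ δ = g` applied to `g = π₁ ∘ ε`. -/

namespace CLAC

variable (C : CLAC.{u, v})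

theorem p1_comp_i1 {A B : C.Obj} : C.comp C.p1 (C.i1 : C.Hom B (C.prod A B)) = C.id B :=
  C.p1_pair _ _

end CLAC

theorem IsComonad.ε_comp_map_comp_δ {C : CLAC.{u, v}} {T : ComonadData C} (hT : IsComonad C T)
    {X Y : C.Obj} (g : C.Hom (T.obj X) Y) :
    C.comp (T.ε Y) (C.comp (T.map g) (T.δ X)) = g := by
  rw [← C.comp_assoc, ← hT.ε_nat, C.comp_assoc, hT.counit_left, C.comp_id]

theorem IsDCT.ε_comp_pd_comp_map_i1 {C : CLAC.{u, v}} {T : ComonadData C} (hT : IsComonad C T)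
    {pd : (A : C.Obj) → C.Hom (T.obj (C.prod A A)) (T.obj A)} (hpd : IsDCT C T pd)
    (A : C.Obj) : C.comp (T.ε A) (C.comp (pd A) (T.map C.i1)) = T.ε A := by
  rw [← C.comp_assoc, hpd.dc3, C.comp_assoc, ← hT.ε_nat, ← C.comp_assoc, C.p1_comp_i1,
    C.id_comp]

theorem statement13_general (C : CLAC.{u, v})
    (T : ComonadData C) (hT : IsComonad C T)
    (pd : (A : C.Obj) → C.Hom (T.obj (C.prod A A)) (T.obj A))
    (hpd : IsDCT C T pd) {A B : C.Obj} (f : C.Hom A B) :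
    C.comp (C.comp f (T.ε A)) (C.comp (pd A) (T.map C.i1)) = C.comp f (T.ε A) ∧
    C.comp (C.comp f (T.ε A)) (pd A) =
      C.comp (C.comp f (T.ε A))
        (C.comp (T.map (C.comp C.p1 (T.ε (C.prod A A)))) (T.δ (C.prod A A))) := by
  constructor
  · rw [C.comp_assoc, hpd.ε_comp_pd_comp_map_i1 hT]
  · rw [C.comp_assoc, C.comp_assoc, hT.ε_comp_map_comp_δ, hpd.dc3]

/-- For a Cartesian differential comonad `(!, δ, ε, ∂)` on a
category with finite biproducts and any map `f : A → B` of the base category,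
the coKleisli map `F(f) := f ∘ ε_A` satisfies `F(f) ∘ ∂_A ∘ !(ι₁) = F(f)`;
hence `F(f)` is D-linear in the coKleisli category, i.e. `D[F(f)] = F(f) ∘ ∂_A`
equals the coKleisli composite of `F(f)` with the coKleisli second projection
`π₁ ∘ ε`. -/
theorem statement13 (C : CLAC.{u, v})
    (hbiprod : ∀ {A B : C.Obj} (f : C.Hom A B), C.Additive f)
    (T : ComonadData C) (hT : IsComonad C T)
    (pd : (A : C.Obj) → C.Hom (T.obj (C.prod A A)) (T.obj A))
    (hpd : IsDCT C T pd) {A B : C.Obj} (f : C.Hom A B) :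
    C.comp (C.comp f (T.ε A)) (C.comp (pd A) (T.map C.i1)) = C.comp f (T.ε A) ∧
    C.comp (C.comp f (T.ε A)) (pd A) =
      C.comp (C.comp f (T.ε A))
        (C.comp (T.map (C.comp C.p1 (T.ε (C.prod A A)))) (T.δ (C.prod A A))) :=
  statement13_general C T hT pd hpd f
end

section
/- Let F be a field and V an F-vector space, and let Zin(V) = ⊕_{n≥1} V^{⊗n} be the free Zinbiel algebra on V with the half-shuffle product <. Define ∂_V : Zin(V) → Zin(V × V) on pure tensors by ∂_V(v₁ ⊗ v₂ ⊗ ⋯ ⊗ v_n) = (0, v₁) ⊗ (v₂, 0) ⊗ ⋯ ⊗ (v_n, 0), extended linearly, and let ι₀ : V → V × V be v ↦ (v, 0) with Zin(ι₀) its functorial extension. Then for all u, w ∈ Zin(V), ∂_V(u < w) = ∂_V(u) < Zin(ι₀)(w). -/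
open scoped TensorProduct DirectSum
open PiTensorProduct

/-- The underlying space of the free Zinbiel algebra on `W`:
`Zin(W) = ⊕_{n ≥ 1} W^{⊗ n}` (indexed so that degree `n` is `W^{⊗ (n+1)}`). -/
abbrev ZinC (F : Type*) [Field F] (W : Type*) [AddCommGroup W] [Module F W] :=
  ⨁ (n : ℕ), ⨂[F] (_ : Fin (n + 1)), W

/-- The pure tensor `v 0 ⊗ v 1 ⊗ ⋯ ⊗ v n` as an element of `Zin(W)`. -/
noncomputable def pureT (F : Type*) [Field F] {W : Type*} [AddCommGroup W]
    [Module F W] (n : ℕ) (v : Fin (n + 1) → W) : ZinC F W :=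
  DirectSum.of (fun n => ⨂[F] (_ : Fin (n + 1)), W) n (tprod F v)

/-- The structure maps of the free Zinbiel algebra on `W`: the half-shuffle
product `hs` (denoted `<`) and the "prepend a letter" operation `L`. -/
structure ZinOps (F : Type*) [Field F] (W : Type*) [AddCommGroup W]
    [Module F W] where
  hs : ZinC F W → ZinC F W → ZinC F W
  L : W → ZinC F W → ZinC F W

/-- The defining properties of the half-shuffle product on the free Zinbiel
algebra `Zin(W) = ⊕_{n≥1} W^{⊗n}`: both operations are bilinear, `L x` sends a
pure tensor `v₁ ⊗ ⋯ ⊗ v_n` to `x ⊗ v₁ ⊗ ⋯ ⊗ v_n`, a single letter acts by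
`x < w = x ⊗ w = L x w`, and `(L x u) < w = L x (u < w + w < u)` (the defining
recursion of the half-shuffle `(v₁ ⊗ ⋯ ⊗ v_n) < (w₁ ⊗ ⋯ ⊗ w_m) =
Σ_σ v₁ ⊗ σ·(v₂ ⊗ ⋯ ⊗ v_n ⊗ w₁ ⊗ ⋯ ⊗ w_m)` over `(n−1, m)`-shuffles `σ`). -/
structure IsZinStruct (F : Type*) [Field F] (W : Type*) [AddCommGroup W]
    [Module F W] (Z : ZinOps F W) : Prop where
  hs_add_left : ∀ u u' w, Z.hs (u + u') w = Z.hs u w + Z.hs u' w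
  hs_add_right : ∀ u w w', Z.hs u (w + w') = Z.hs u w + Z.hs u w'
  hs_smul_left : ∀ (r : F) u w, Z.hs (r • u) w = r • Z.hs u w
  hs_smul_right : ∀ (r : F) u w, Z.hs u (r • w) = r • Z.hs u w
  L_add_left : ∀ (x x' : W) u, Z.L (x + x') u = Z.L x u + Z.L x' u
  L_add_right : ∀ (x : W) u u', Z.L x (u + u') = Z.L x u + Z.L x u'
  L_smul_left : ∀ (r : F) (x : W) u, Z.L (r • x) u = r • Z.L x u
  L_smul_right : ∀ (r : F) (x : W) u, Z.L x (r • u) = r • Z.L x u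
  L_pure : ∀ (x : W) (n : ℕ) (v : Fin (n + 1) → W),
    Z.L x (pureT F n v) = pureT F (n + 1) (Fin.cons x v)
  hs_single : ∀ (x : W) (w : ZinC F W),
    Z.hs (pureT F 0 (fun _ => x)) w = Z.L x w
  hs_rec : ∀ (x : W) (u w : ZinC F W),
    Z.hs (Z.L x u) w = Z.L x (Z.hs u w + Z.hs w u)

/-!
Every element of `Zin(V)` is a combination of single letters and of words `L x u`, and the
half-shuffle recursion `(L x u) < w = L x (u < w + w < u)` determines `<` from these two cases.
A linear map `D` intertwining `L x` with `L (ψ x) ∘ Zin(φ)` therefore satisfies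
`D (u < w) = D u < Zin(φ) w` as soon as `Zin(φ)` is a Zinbiel morphism.  The letterwise map
`Zin(φ)` intertwines `L x` with `L (φ x) ∘ Zin(φ)`, and a recursion on total degree shows that it
is a morphism.  The theorem is the case `D = ∂_V`, `ψ = (0, ·)`, `φ = ι₀`.
-/

section

variable {F : Type*} [Field F] {V W : Type*} [AddCommGroup V] [Module F V]
  [AddCommGroup W] [Module F W]

namespace ZinC

theorem linearMap_ext {M : Type*} [AddCommGroup M] [Module F M]
    {f g : ZinC F V →ₗ[F] M} (h : ∀ n v, f (pureT F n v) = g (pureT F n v)) : f = g :=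
  DirectSum.linearMap_ext F fun n => PiTensorProduct.ext <| MultilinearMap.ext (h n)

theorem pureT_zero_eq_const (v : Fin 1 → V) : pureT F 0 v = pureT F 0 (fun _ => v 0) := by
  congr 1
  exact funext fun i => congrArg v (Subsingleton.elim i 0)

end ZinC

namespace IsZinStruct

variable {Z : ZinOps F V}

theorem pureT_succ (hZ : IsZinStruct F V Z) (n : ℕ) (v : Fin (n + 2) → V) :
    pureT F (n + 1) v = Z.L (v 0) (pureT F n (Fin.tail v)) := by
  rw [hZ.L_pure, Fin.cons_self_tail]

variable (hZ : IsZinStruct F V Z)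

def hsLeft (u : ZinC F V) : ZinC F V →ₗ[F] ZinC F V where
  toFun := Z.hs u
  map_add' := hZ.hs_add_right u
  map_smul' r := hZ.hs_smul_right r u

def hsRight (w : ZinC F V) : ZinC F V →ₗ[F] ZinC F V where
  toFun u := Z.hs u w
  map_add' u u' := hZ.hs_add_left u u' w
  map_smul' r u := hZ.hs_smul_left r u w

def prepend (x : V) : ZinC F V →ₗ[F] ZinC F V where
  toFun := Z.L x
  map_add' := hZ.L_add_right x
  map_smul' r := hZ.L_smul_right r x

end IsZinStruct

namespace ZinC

section Intertwining

variable {ZV : ZinOps F V} {ZW : ZinOps F W} {Φ D : ZinC F V →ₗ[F] ZinC F W} {ψ : V → W}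

theorem map_L_of_map_pureT {φ : V → W} (hZV : IsZinStruct F V ZV) (hZW : IsZinStruct F W ZW)
    (hD_pure : ∀ n v, D (pureT F (n + 1) v) =
      pureT F (n + 1) (Fin.cons (ψ (v 0)) fun i => φ (v i.succ)))
    (hΦ_pure : ∀ n v, Φ (pureT F n v) = pureT F n fun i => φ (v i)) (x : V) (w : ZinC F V) :
    D (ZV.L x w) = ZW.L (ψ x) (Φ w) :=
  LinearMap.congr_fun (linearMap_ext (f := D ∘ₗ hZV.prepend x)
    (g := hZW.prepend (ψ x) ∘ₗ Φ) fun n v => by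
      change D (ZV.L x _) = ZW.L (ψ x) (Φ _)
      rw [hZV.L_pure, hD_pure, hΦ_pure, hZW.L_pure]
      rfl) w

theorem map_hs_pureT_zero (hZV : IsZinStruct F V ZV) (hZW : IsZinStruct F W ZW)
    (hD_single : ∀ x, D (pureT F 0 (fun _ => x)) = pureT F 0 (fun _ => ψ x))
    (hD_L : ∀ x w, D (ZV.L x w) = ZW.L (ψ x) (Φ w)) (v : Fin 1 → V) (w : ZinC F V) :
    D (ZV.hs (pureT F 0 v) w) = ZW.hs (D (pureT F 0 v)) (Φ w) := by
  rw [pureT_zero_eq_const, hZV.hs_single, hD_L, hD_single, hZW.hs_single]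

theorem map_hs_L (hZV : IsZinStruct F V ZV) (hZW : IsZinStruct F W ZW)
    (hD_L : ∀ x w, D (ZV.L x w) = ZW.L (ψ x) (Φ w)) (x : V) (u w : ZinC F V)
    (huw : Φ (ZV.hs u w) = ZW.hs (Φ u) (Φ w)) (hwu : Φ (ZV.hs w u) = ZW.hs (Φ w) (Φ u)) :
    D (ZV.hs (ZV.L x u) w) = ZW.hs (D (ZV.L x u)) (Φ w) := by
  rw [hZV.hs_rec, hD_L, map_add, huw, hwu, hD_L, hZW.hs_rec]

theorem map_hs_of_map_L (hZV : IsZinStruct F V ZV) (hZW : IsZinStruct F W ZW)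
    (hD_single : ∀ x, D (pureT F 0 (fun _ => x)) = pureT F 0 (fun _ => ψ x))
    (hD_L : ∀ x w, D (ZV.L x w) = ZW.L (ψ x) (Φ w))
    (hΦ : ∀ u w, Φ (ZV.hs u w) = ZW.hs (Φ u) (Φ w)) (u w : ZinC F V) :
    D (ZV.hs u w) = ZW.hs (D u) (Φ w) := by
  refine LinearMap.congr_fun (linearMap_ext (f := D ∘ₗ hZV.hsRight w)
    (g := hZW.hsRight (Φ w) ∘ₗ D) fun n v => ?_) u
  change D (ZV.hs _ w) = ZW.hs (D _) (Φ w)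
  cases n with
  | zero => exact map_hs_pureT_zero hZV hZW hD_single hD_L v w
  | succ n =>
    rw [hZV.pureT_succ]
    exact map_hs_L hZV hZW hD_L _ _ _ (hΦ _ _) (hΦ _ _)

end Intertwining

section Letterwise

variable {ZV : ZinOps F V} {ZW : ZinOps F W} {Φ : ZinC F V →ₗ[F] ZinC F W} {φ : V → W}

theorem map_L_of_letterwise (hZV : IsZinStruct F V ZV) (hZW : IsZinStruct F W ZW)
    (hΦ_pure : ∀ n v, Φ (pureT F n v) = pureT F n fun i => φ (v i)) (x : V) (w : ZinC F V) :
    Φ (ZV.L x w) = ZW.L (φ x) (Φ w) :=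
  map_L_of_map_pureT hZV hZW
    (fun n v => by rw [hΦ_pure]; exact congrArg _ (Fin.cons_self_tail _).symm) hΦ_pure x w

theorem map_hs_pureT_of_letterwise (hZV : IsZinStruct F V ZV) (hZW : IsZinStruct F W ZW)
    (hΦ_pure : ∀ n v, Φ (pureT F n v) = pureT F n fun i => φ (v i)) :
    ∀ (a b : ℕ) (va : Fin (a + 1) → V) (vb : Fin (b + 1) → V),
      Φ (ZV.hs (pureT F a va) (pureT F b vb)) = ZW.hs (Φ (pureT F a va)) (Φ (pureT F b vb))
  | 0, _, va, _ => map_hs_pureT_zero hZV hZW (fun x => hΦ_pure 0 fun _ => x)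
      (map_L_of_letterwise hZV hZW hΦ_pure) va _
  | a + 1, b, va, vb => by
    rw [hZV.pureT_succ]
    exact map_hs_L hZV hZW (map_L_of_letterwise hZV hZW hΦ_pure) _ _ _
      (map_hs_pureT_of_letterwise hZV hZW hΦ_pure a b _ _)
      (map_hs_pureT_of_letterwise hZV hZW hΦ_pure b a _ _)
termination_by a b => a + b

theorem map_hs_of_letterwise (hZV : IsZinStruct F V ZV) (hZW : IsZinStruct F W ZW)
    (hΦ_pure : ∀ n v, Φ (pureT F n v) = pureT F n fun i => φ (v i)) (u w : ZinC F V) :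
    Φ (ZV.hs u w) = ZW.hs (Φ u) (Φ w) := by
  have h_pure_right : ∀ b vb u,
      Φ (ZV.hs u (pureT F b vb)) = ZW.hs (Φ u) (Φ (pureT F b vb)) :=
    fun b vb u => LinearMap.congr_fun (linearMap_ext (f := Φ ∘ₗ hZV.hsRight _)
      (g := hZW.hsRight _ ∘ₗ Φ) fun a va =>
        map_hs_pureT_of_letterwise hZV hZW hΦ_pure a b va vb) u
  exact LinearMap.congr_fun (linearMap_ext (f := Φ ∘ₗ hZV.hsLeft u)
    (g := hZW.hsLeft (Φ u) ∘ₗ Φ) fun b vb => h_pure_right b vb u) w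

end Letterwise

end ZinC

end

/-- Let `V` be an `F`-vector space, `Zin(V) = ⊕_{n≥1} V^{⊗n}`
the free Zinbiel algebra on `V` with half-shuffle product `<`.  Let
`∂ : Zin(V) → Zin(V × V)` be the linear map with
`∂(v₁ ⊗ v₂ ⊗ ⋯ ⊗ v_n) = (0, v₁) ⊗ (v₂, 0) ⊗ ⋯ ⊗ (v_n, 0)` on pure tensors,
and let `Zin(ι₀) : Zin(V) → Zin(V × V)` be the functorial extension of
`ι₀ : v ↦ (v, 0)` (acting letterwise on pure tensors).  Then for all
`u, w ∈ Zin(V)`:  `∂(u < w) = ∂(u) < Zin(ι₀)(w)`. -/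
theorem statement17 (F : Type*) [Field F] (V : Type*) [AddCommGroup V]
    [Module F V]
    (ZV : ZinOps F V) (hZV : IsZinStruct F V ZV)
    (ZP : ZinOps F (V × V)) (hZP : IsZinStruct F (V × V) ZP)
    (Zι : ZinC F V → ZinC F (V × V))
    (hZι_add : ∀ u u', Zι (u + u') = Zι u + Zι u')
    (hZι_smul : ∀ (r : F) u, Zι (r • u) = r • Zι u)
    (hZι_pure : ∀ (n : ℕ) (v : Fin (n + 1) → V),
      Zι (pureT F n v) = pureT F n (fun i => (v i, 0)))
    (pd : ZinC F V → ZinC F (V × V))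
    (hpd_add : ∀ u u', pd (u + u') = pd u + pd u')
    (hpd_smul : ∀ (r : F) u, pd (r • u) = r • pd u)
    (hpd_pure : ∀ (n : ℕ) (v : Fin (n + 1) → V),
      pd (pureT F n v) =
        pureT F n (fun i => if i = 0 then ((0 : V), v i) else (v i, 0))) :
    ∀ u w : ZinC F V, pd (ZV.hs u w) = ZP.hs (pd u) (Zι w) := by
  intro u w
  let Φ := IsLinearMap.mk' Zι ⟨hZι_add, hZι_smul⟩
  let D := IsLinearMap.mk' pd ⟨hpd_add, hpd_smul⟩
  have hD_pure : ∀ n v, D (pureT F (n + 1) v) =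
      pureT F (n + 1) (Fin.cons ((0 : V), v 0) fun i => (v i.succ, (0 : V))) := by
    intro n v
    rw [IsLinearMap.mk'_apply, hpd_pure]
    congr 1
    exact funext (Fin.cases (by simp) fun i => by simp)
  have hD_single : ∀ x, D (pureT F 0 fun _ => x) = pureT F 0 fun _ => ((0 : V), x) := by
    intro x
    rw [IsLinearMap.mk'_apply, hpd_pure, ZinC.pureT_zero_eq_const]
    simp
  have hΦ_pure : ∀ n v, Φ (pureT F n v) = pureT F n fun i => (v i, (0 : V)) := hZι_pure
  have hD_L := ZinC.map_L_of_map_pureT (ψ := fun x => ((0 : V), x))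
    (φ := fun x => (x, (0 : V))) hZV hZP hD_pure hΦ_pure
  have hΦ_hs := ZinC.map_hs_of_letterwise (φ := fun x => (x, (0 : V))) hZV hZP hΦ_pure
  exact ZinC.map_hs_of_map_L hZV hZP hD_single hD_L hΦ_hs u w
end
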